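/- Let m ≥ 2 and n ≥ 1 be integers and let ν ↦ A_ν be a linear Hermitian family of n×n matrices. If all eigenvalues of A_ν are nonzero (equivalently, A_ν is invertible) for every ν ∈ ℝ^m with |ν| = 1, then n is even. -/

import Mathlib

/-!
The determinant of a Hermitian matrix is real, so `ν ↦ Re det (A ν)` is a continuous real function
on the unit sphere which, by hypothesis, never vanishes there. If `n` were odd, linearity would give
`det (A (-ν)) = (-1)ⁿ det (A ν) = -det (A ν)`, so this function takes both signs; since the sphere
of `ℝᵐ` is connected for `m ≥ 2`, it would then vanish somewhere.
-/

open Metric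

theorem Matrix.IsHermitian.ofReal_re_det {ι 𝕜 : Type*} [Fintype ι] [DecidableEq ι] [RCLike 𝕜]
    {M : Matrix ι ι 𝕜} (hM : M.IsHermitian) : ((RCLike.re M.det : ℝ) : 𝕜) = M.det :=
  RCLike.conj_eq_iff_re.mp (by rw [starRingEnd_apply, ← Matrix.det_conjTranspose, hM])

theorem IsPreconnected.exists_eq_zero_of_map_neg {E α : Type*} [TopologicalSpace E] [Neg E]
    [AddCommGroup α] [LinearOrder α] [IsOrderedAddMonoid α] [TopologicalSpace α]
    [OrderClosedTopology α] {s : Set E} (hs : IsPreconnected s) {x : E} (hx : x ∈ s)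
    (hnx : -x ∈ s) {f : E → α} (hf : ContinuousOn f s) (hneg : f (-x) = -f x) :
    ∃ y ∈ s, f y = 0 := by
  rcases le_total (f x) 0 with h | h
  · exact hs.intermediate_value hx hnx hf ⟨h, by rw [hneg]; exact neg_nonneg.mpr h⟩
  · exact hs.intermediate_value hnx hx hf ⟨by rw [hneg]; exact neg_nonpos.mpr h, h⟩

theorem LinearMap.exists_mem_sphere_not_isUnit_of_isHermitian {E ι 𝕜 : Type*}
    [NormedAddCommGroup E] [NormedSpace ℝ E] [FiniteDimensional ℝ E] [Fintype ι] [DecidableEq ι]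
    [RCLike 𝕜] (hE : 1 < Module.rank ℝ E) (hι : Odd (Fintype.card ι))
    (A : E →ₗ[ℝ] Matrix ι ι 𝕜) (hA : ∀ ν, (A ν).IsHermitian) :
    ∃ ν ∈ sphere (0 : E) 1, ¬IsUnit (A ν) := by
  have : Nontrivial E := rank_pos_iff_nontrivial.mp (zero_lt_one.trans hE)
  obtain ⟨ν₀, hν₀⟩ := (NormedSpace.sphere_nonempty (x := (0 : E))).mpr zero_le_one
  have hcont : Continuous fun ν => RCLike.re (A ν).det :=
    RCLike.continuous_re.comp (A.continuous_of_finiteDimensional.matrix_det)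
  have hneg : RCLike.re (A (-ν₀)).det = -RCLike.re (A ν₀).det := by
    rw [map_neg, Matrix.det_neg, hι.neg_one_pow, neg_one_mul, map_neg]
  obtain ⟨ν, hν, hre⟩ := (isPreconnected_sphere hE 0 1).exists_eq_zero_of_map_neg hν₀
    (by simpa using hν₀) hcont.continuousOn hneg
  refine ⟨ν, hν, fun hunit => ?_⟩
  have hdet : (A ν).det = 0 := by rw [← (hA ν).ofReal_re_det, hre, RCLike.ofReal_zero]
  exact not_isUnit_zero (hdet ▸ (Matrix.isUnit_iff_isUnit_det _).mp hunit)

theorem statement_1 (m n : ℕ) (hm : 2 ≤ m)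
    (A : EuclideanSpace ℝ (Fin m) →ₗ[ℝ] Matrix (Fin n) (Fin n) ℂ)
    (hHerm : ∀ ν, (A ν).IsHermitian)
    (hinv : ∀ ν : EuclideanSpace ℝ (Fin m), ‖ν‖ = 1 → IsUnit (A ν)) :
    Even n := by
  by_contra hodd
  have hrank : 1 < Module.rank ℝ (EuclideanSpace ℝ (Fin m)) := by
    rw [← Module.finrank_eq_rank, finrank_euclideanSpace_fin]
    exact_mod_cast hm
  obtain ⟨ν, hν, hA⟩ := A.exists_mem_sphere_not_isUnit_of_isHermitian hrank
    (by simpa [Nat.not_even_iff_odd] using hodd) hHerm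
  exact hA (hinv ν (mem_sphere_zero_iff_norm.mp hν))
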